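/- Let (C, J) be a site and G, A abelian sheaves on (C, J). The image of the map d₀^* : Ext¹(G, A) → Ext¹(ℤ[G], A) induced by the counit d₀ : ℤ[G] → G is contained in the subgroup H¹_m(G, A), i.e. every class in the image is killed by ℤ[m]^* − ℤ[pr₁]^* − ℤ[pr₂]^*. -/

import Mathlib

open CategoryTheory Limits Opposite

universe u

variable {C : Type u} [SmallCategory C] (J : GrothendieckTopology C)

instance : HasFiniteBiproducts (Sheaf J AddCommGrpCat.{u}) := Abelian.hasFiniteBiproducts

/-- The free abelian sheaf functor `ℤ[-]`. -/
noncomputable abbrev FreeAb : Sheaf J (Type u) ⥤ Sheaf J AddCommGrpCat.{u} :=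
  Sheaf.composeAndSheafify J AddCommGrpCat.free

/-- The underlying sheaf of types functor. -/
noncomputable abbrev Und : Sheaf J AddCommGrpCat.{u} ⥤ Sheaf J (Type u) :=
  sheafCompose J (forget AddCommGrpCat)

/-- The free–forgetful adjunction for abelian sheaves. -/
noncomputable def freeAdj : FreeAb J ⊣ Und J := Sheaf.adjunction J AddCommGrpCat.adj

/-- `s`-th power of an abelian sheaf. -/
noncomputable def pw (G : Sheaf J AddCommGrpCat.{u}) (s : ℕ) : Sheaf J AddCommGrpCat.{u} :=
  ⨁ (fun _ : Fin s => G)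

/-- The additive morphism `G^a ⟶ G^b` given by an integer matrix. -/
noncomputable def mat (G : Sheaf J AddCommGrpCat.{u}) {a b : ℕ} (c : Fin b → Fin a → ℤ) :
    pw J G a ⟶ pw J G b :=
  biproduct.lift fun j => ∑ i, c j i • biproduct.π (fun _ : Fin a => G) i

/-- `ℤ[G^s]`. -/
noncomputable def ZZ (G : Sheaf J AddCommGrpCat.{u}) (s : ℕ) : Sheaf J AddCommGrpCat.{u} :=
  (FreeAb J).obj ((Und J).obj (pw J G s))

/-- `ℤ[f]` for a map of powers. -/
noncomputable def Zmap (G : Sheaf J AddCommGrpCat.{u}) {a b : ℕ} (f : pw J G a ⟶ pw J G b) :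
    ZZ J G a ⟶ ZZ J G b :=
  (FreeAb J).map ((Und J).map f)

/-- `d₀ : ℤ[G] ⟶ G`, `[x] ↦ x`, the counit of the free–forgetful adjunction. -/
noncomputable def d0 (G : Sheaf J AddCommGrpCat.{u}) : ZZ J G 1 ⟶ G :=
  (freeAdj J).counit.app (pw J G 1) ≫ biproduct.π (fun _ : Fin 1 => G) 0

/-- `d₁ : ℤ[G²] ⟶ ℤ[G]`, `[x,y] ↦ [x+y] - [x] - [y]`. -/
noncomputable def d1 (G : Sheaf J AddCommGrpCat.{u}) : ZZ J G 2 ⟶ ZZ J G 1 :=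
  Zmap J G (mat J G ![![1, 1]]) - Zmap J G (mat J G ![![1, 0]]) - Zmap J G (mat J G ![![0, 1]])

/-- `d₂ : ℤ[G³] ⊞ ℤ[G²] ⟶ ℤ[G²]`. -/
noncomputable def d2 (G : Sheaf J AddCommGrpCat.{u}) : ZZ J G 3 ⊞ ZZ J G 2 ⟶ ZZ J G 2 :=
  biprod.desc
    (Zmap J G (mat J G ![![1, 1, 0], ![0, 0, 1]]) - Zmap J G (mat J G ![![1, 0, 0], ![0, 1, 1]])
      + Zmap J G (mat J G ![![1, 0, 0], ![0, 1, 0]]) - Zmap J G (mat J G ![![0, 1, 0], ![0, 0, 1]]))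
    (Zmap J G (mat J G ![![1, 0], ![0, 1]]) - Zmap J G (mat J G ![![0, 1], ![1, 0]]))

/-- `d₃ : ℤ[G⁴] ⊞ ℤ[G³] ⊞ ℤ[G³] ⊞ ℤ[G²] ⊞ ℤ[G] ⟶ ℤ[G³] ⊞ ℤ[G²]`. -/
noncomputable def d3 (G : Sheaf J AddCommGrpCat.{u}) :
    ZZ J G 4 ⊞ (ZZ J G 3 ⊞ (ZZ J G 3 ⊞ (ZZ J G 2 ⊞ ZZ J G 1))) ⟶ ZZ J G 3 ⊞ ZZ J G 2 :=
  biprod.desc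
    (biprod.lift
      (Zmap J G (mat J G ![![1, 1, 0, 0], ![0, 0, 1, 0], ![0, 0, 0, 1]])
        - Zmap J G (mat J G ![![1, 0, 0, 0], ![0, 1, 1, 0], ![0, 0, 0, 1]])
        + Zmap J G (mat J G ![![1, 0, 0, 0], ![0, 1, 0, 0], ![0, 0, 1, 1]])
        - Zmap J G (mat J G ![![1, 0, 0, 0], ![0, 1, 0, 0], ![0, 0, 1, 0]])
        - Zmap J G (mat J G ![![0, 1, 0, 0], ![0, 0, 1, 0], ![0, 0, 0, 1]]))
      0)
    (biprod.desc
      (biprod.lift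
        (- Zmap J G (mat J G ![![1, 0, 0], ![0, 1, 0], ![0, 0, 1]])
          + Zmap J G (mat J G ![![1, 0, 0], ![0, 0, 1], ![0, 1, 0]])
          - Zmap J G (mat J G ![![0, 0, 1], ![1, 0, 0], ![0, 1, 0]]))
        (Zmap J G (mat J G ![![1, 1, 0], ![0, 0, 1]])
          - Zmap J G (mat J G ![![1, 0, 0], ![0, 0, 1]])
          - Zmap J G (mat J G ![![0, 1, 0], ![0, 0, 1]])))
      (biprod.desc
        (biprod.lift
          (Zmap J G (mat J G ![![1, 0, 0], ![0, 1, 0], ![0, 0, 1]])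
            - Zmap J G (mat J G ![![0, 1, 0], ![1, 0, 0], ![0, 0, 1]])
            + Zmap J G (mat J G ![![0, 1, 0], ![0, 0, 1], ![1, 0, 0]]))
          (Zmap J G (mat J G ![![1, 0, 0], ![0, 1, 1]])
            - Zmap J G (mat J G ![![1, 0, 0], ![0, 1, 0]])
            - Zmap J G (mat J G ![![1, 0, 0], ![0, 0, 1]])))
        (biprod.desc
          (biprod.lift 0
            (Zmap J G (mat J G ![![1, 0], ![0, 1]]) + Zmap J G (mat J G ![![0, 1], ![1, 0]])))
          (biprod.lift 0 (Zmap J G (mat J G ![![1], ![1]]))))))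

variable [EnoughInjectives (Sheaf J AddCommGrpCat.{u})]

/-- `Ext^i(M, A)`, defined as the `i`-th right derived functor of `Hom(M, -)` evaluated at `A`. -/
noncomputable def ExtGrp (i : ℕ) (M A : Sheaf J AddCommGrpCat.{u}) : AddCommGrpCat.{u} :=
  ((preadditiveCoyoneda.obj (op M)).rightDerived i).obj A

/-- The map `Ext^i(N, A) ⟶ Ext^i(M, A)` induced by `f : M ⟶ N` in the first variable. -/
noncomputable def extMap (i : ℕ) {M N : Sheaf J AddCommGrpCat.{u}} (f : M ⟶ N)
    (A : Sheaf J AddCommGrpCat.{u}) : ExtGrp J i N A ⟶ ExtGrp J i M A :=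
  (NatTrans.rightDerived (preadditiveCoyoneda.map f.op) i).app A

/-- `H¹_m(G, A)`: the kernel of `ℤ[m]^* - ℤ[pr₁]^* - ℤ[pr₂]^*` on `Ext¹(ℤ[G], A)`,
where `m` is the addition of `G` and `pr₁, pr₂` are the projections `G² → G`. -/
noncomputable def Hm (G A : Sheaf J AddCommGrpCat.{u}) :
    AddSubgroup (ExtGrp J 1 (ZZ J G 1) A) :=
  AddMonoidHom.ker
    (extMap J 1 (Zmap J G (mat J G ![![1, 1]])) A
      - extMap J 1 (Zmap J G (mat J G ![![1, 0]])) A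
      - extMap J 1 (Zmap J G (mat J G ![![0, 1]])) A).hom

/-!
Write `d₁ := ℤ[m] - ℤ[pr₁] - ℤ[pr₂] : ℤ[G²] ⟶ ℤ[G]`. Since `Ext¹(-, A)` is additive and
contravariantly functorial in its first variable, `(ℤ[m]^* - ℤ[pr₁]^* - ℤ[pr₂]^*) ∘ d₀^* = (d₁ ≫ d₀)^*`.
By naturality of the counit, `ℤ[f] ≫ d₀ = d₀ ≫ f`, so `d₁ ≫ d₀ = d₀ ≫ (m - pr₁ - pr₂) = 0`.
-/

section RightDerived

variable {𝒜 ℬ : Type*} [Category 𝒜] [Category ℬ] [Abelian 𝒜] [HasInjectiveResolutions 𝒜]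
  [Abelian ℬ] {F F' : 𝒜 ⥤ ℬ} [F.Additive] [F'.Additive]

theorem NatTrans.rightDerived_add (α β : F ⟶ F') (n : ℕ) :
    NatTrans.rightDerived (α + β) n = NatTrans.rightDerived α n + NatTrans.rightDerived β n := by
  ext X
  have hcomplex : (NatTrans.mapHomologicalComplex (α + β) (ComplexShape.up ℕ)).app
        (injectiveResolution X).cocomplex =
      (NatTrans.mapHomologicalComplex α (ComplexShape.up ℕ)).app (injectiveResolution X).cocomplex +
        (NatTrans.mapHomologicalComplex β (ComplexShape.up ℕ)).app
          (injectiveResolution X).cocomplex := by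
    ext; simp; rfl
  simp only [NatTrans.app_add, InjectiveResolution.rightDerived_app_eq _ (injectiveResolution X),
    hcomplex, Functor.map_add, Preadditive.add_comp, Preadditive.comp_add]

end RightDerived

theorem preadditiveCoyoneda_map_add {𝒜 : Type*} [Category 𝒜] [Preadditive 𝒜] {M N : 𝒜}
    (f g : M ⟶ N) :
    preadditiveCoyoneda.map (f + g).op =
      preadditiveCoyoneda.map f.op + preadditiveCoyoneda.map g.op := by
  ext Y h
  exact Preadditive.add_comp _ _ _ _ _ _

noncomputable def extMapHom (i : ℕ) (M N A : Sheaf J AddCommGrpCat.{u}) :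
    (M ⟶ N) →+ (ExtGrp J i N A ⟶ ExtGrp J i M A) :=
  AddMonoidHom.mk' (extMap J i · A) fun f g => by
    simp only [extMap, preadditiveCoyoneda_map_add, NatTrans.rightDerived_add, NatTrans.app_add]
    rfl

theorem extMap_sub (i : ℕ) {M N : Sheaf J AddCommGrpCat.{u}} (f g : M ⟶ N)
    (A : Sheaf J AddCommGrpCat.{u}) :
    extMap J i (f - g) A = extMap J i f A - extMap J i g A :=
  map_sub (extMapHom J i M N A) f g

theorem extMap_zero (i : ℕ) (M N A : Sheaf J AddCommGrpCat.{u}) :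
    extMap J i (0 : M ⟶ N) A = 0 :=
  map_zero (extMapHom J i M N A)

theorem extMap_comp (i : ℕ) {M N P : Sheaf J AddCommGrpCat.{u}} (f : M ⟶ N) (g : N ⟶ P)
    (A : Sheaf J AddCommGrpCat.{u}) :
    extMap J i (f ≫ g) A = extMap J i g A ≫ extMap J i f A := by
  simp only [extMap, op_comp, Functor.map_comp, NatTrans.rightDerived_comp, NatTrans.comp_app]
  rfl

section Counit

omit [EnoughInjectives (Sheaf J AddCommGrpCat.{u})]

variable (G : Sheaf J AddCommGrpCat.{u})

theorem Zmap_comp_d0 {a : ℕ} (f : pw J G a ⟶ pw J G 1) :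
    Zmap J G f ≫ d0 J G =
      (freeAdj J).counit.app (pw J G a) ≫ f ≫ biproduct.π (fun _ : Fin 1 => G) 0 :=
  (reassoc_of% ((freeAdj J).counit.naturality f)) _

theorem mat_comp_π {a b : ℕ} (c : Fin b → Fin a → ℤ) (j : Fin b) :
    mat J G c ≫ biproduct.π (fun _ : Fin b => G) j =
      ∑ i, c j i • biproduct.π (fun _ : Fin a => G) i :=
  biproduct.lift_π _ _

theorem mat_comp_π_add_sub_fst_sub_snd :
    mat J G ![![1, 1]] ≫ biproduct.π (fun _ : Fin 1 => G) 0
      - mat J G ![![1, 0]] ≫ biproduct.π (fun _ : Fin 1 => G) 0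
      - mat J G ![![0, 1]] ≫ biproduct.π (fun _ : Fin 1 => G) 0 = 0 := by
  simp only [mat_comp_π, Fin.sum_univ_two, Matrix.cons_val', Matrix.cons_val_zero,
    Matrix.cons_val_one, Matrix.cons_val_fin_one, one_smul, zero_smul, add_zero, zero_add]
  exact sub_eq_zero.mpr (add_sub_cancel_left _ _)

theorem d1_comp_d0 : d1 J G ≫ d0 J G = 0 := by
  simp only [d1, Preadditive.sub_comp, Zmap_comp_d0]
  -- `pw J G 1` agrees with the source `⨁ fun _ => G` of `biproduct.π` only up to unfolding.
  erw [← Preadditive.comp_sub, ← Preadditive.comp_sub, mat_comp_π_add_sub_fst_sub_snd, comp_zero]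
  rfl

end Counit

/-- The image of `d₀^* : Ext¹(G, A) → Ext¹(ℤ[G], A)` is contained in
`H¹_m(G, A)`, i.e. every class in the image is killed by `ℤ[m]^* - ℤ[pr₁]^* - ℤ[pr₂]^*`. -/
theorem range_extMap_d0_le_Hm (G A : Sheaf J AddCommGrpCat.{u}) :
    AddMonoidHom.range (extMap J 1 (d0 J G) A).hom ≤ Hm J G A := by
  rintro _ ⟨y, rfl⟩
  rw [Hm, AddMonoidHom.mem_ker, ← extMap_sub, ← extMap_sub, ← ConcreteCategory.comp_apply,
    ← extMap_comp, ← d1, d1_comp_d0, extMap_zero]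
  rfl
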